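/- arXiv:1504.06817 — 2 statements merged into one kernel-verified Lean document; each statement's English description precedes it below -/
import Mathlib

section
/- (Deterministic derivation of inequality (a-4).) Let p, q be positive integers, let Ω_1, …, Ω_p be finite multisets of index pairs from [m]×[n] each of cardinality q, and let Ω be their (multiset) union, so |Ω| = pq. Let r > 0 and let W_0, W_1, …, W_{p−1} ∈ ℝ^{m×n} satisfy (mn/q)·⟨R_{Ω_j}(W_{j−1}), W_{j−1}⟩ ≤ (3r/2)·4^{−j} for each j = 1, …, p. Define Y = (mn/q)·Σ_{j=1}^p R_{Ω_j}(W_{j−1}). Then for every A ∈ ℝ^{m×n}, |⟨Y, A⟩| ≤ √(m n p r/(2|Ω|)) · √(⟨R_Ω(A), A⟩) = √(m n r/(2q)) · √(⟨R_Ω(A), A⟩). -/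
open scoped BigOperators
open Matrix
open MeasureTheory

namespace MC

variable {m n r s : ℕ}

/-- Trace inner product `⟨X,Y⟩ = trace(Xᵀ Y)`. -/
def ip (A B : Matrix (Fin m) (Fin n) ℝ) : ℝ := ∑ i, ∑ j, A i j * B i j

/-- Frobenius norm. -/
noncomputable def fro (A : Matrix (Fin m) (Fin n) ℝ) : ℝ := Real.sqrt (ip A A)

/-- Largest absolute value of an entry. -/
noncomputable def infNorm (A : Matrix (Fin m) (Fin n) ℝ) : ℝ := ⨆ i, ⨆ j, |A i j|

/-- Nuclear norm: sum of singular values. -/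
noncomputable def nuclearNorm (A : Matrix (Fin m) (Fin n) ℝ) : ℝ :=
  ∑ j, Real.sqrt ((Matrix.isHermitian_conjTranspose_mul_self A).eigenvalues j)

/-- Spectral norm: largest singular value. -/
noncomputable def specNorm (A : Matrix (Fin m) (Fin n) ℝ) : ℝ :=
  ⨆ j, Real.sqrt ((Matrix.isHermitian_conjTranspose_mul_self A).eigenvalues j)

/-- Sampling operator for a multiset of index pairs. -/
def RΩ (Ω : Multiset (Fin m × Fin n)) (Z : Matrix (Fin m) (Fin n) ℝ) :
    Matrix (Fin m) (Fin n) ℝ :=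
  Matrix.of fun i j => (Ω.count (i, j)) * Z i j

def PT (U : Matrix (Fin m) (Fin r) ℝ) (V : Matrix (Fin n) (Fin r) ℝ)
    (Z : Matrix (Fin m) (Fin n) ℝ) : Matrix (Fin m) (Fin n) ℝ :=
  U * Uᵀ * Z + Z * (V * Vᵀ) - U * Uᵀ * Z * (V * Vᵀ)

def PTperp (U : Matrix (Fin m) (Fin r) ℝ) (V : Matrix (Fin n) (Fin r) ℝ)
    (Z : Matrix (Fin m) (Fin n) ℝ) : Matrix (Fin m) (Fin n) ℝ :=
  (1 - U * Uᵀ) * Z * (1 - V * Vᵀ)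

/-- Objective of nuclear-norm regularized least squares. -/
noncomputable def obj (Ω : Multiset (Fin m × Fin n)) (A : Matrix (Fin m) (Fin n) ℝ)
    (lam : ℝ) (B : Matrix (Fin m) (Fin n) ℝ) : ℝ :=
  (1 / 2) * (Ω.map fun p => (B p.1 p.2 - A p.1 p.2) ^ 2).sum + lam * nuclearNorm B

/-- Uniform probability measure on index pairs. -/
noncomputable def unifPair (m n : ℕ) : Measure (Fin m × Fin n) :=
  (Fintype.card (Fin m × Fin n) : ENNReal)⁻¹ • Measure.count

/-- Law of `s` i.i.d. uniform index pairs. -/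
noncomputable def sampleMeasure (m n s : ℕ) : Measure (Fin s → Fin m × Fin n) :=
  Measure.pi fun _ => unifPair m n

/-- The multiset of sampled indices. -/
def toMS (ω : Fin s → Fin m × Fin n) : Multiset (Fin m × Fin n) :=
  Multiset.map ω Finset.univ.val

/-! Writing `c = mn/q`, the batch-wise weighted Cauchy–Schwarz inequality gives
`⟨Y, A⟩² ≤ c² (∑ⱼ ⟨R_{Ωⱼ} Wⱼ, Wⱼ⟩) ⟨R_Ω A, A⟩`, and the hypotheses bound
`c ∑ⱼ ⟨R_{Ωⱼ} Wⱼ, Wⱼ⟩` by `(3r/2) ∑ⱼ 4^{-j} ≤ r/2`. -/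

lemma ip_smul_left (c : ℝ) (X A : Matrix (Fin m) (Fin n) ℝ) : ip (c • X) A = c * ip X A := by
  simp only [ip, Matrix.smul_apply, smul_eq_mul, Finset.mul_sum, mul_assoc]

lemma ip_sum_left {ι : Type*} (s : Finset ι) (X : ι → Matrix (Fin m) (Fin n) ℝ)
    (A : Matrix (Fin m) (Fin n) ℝ) : ip (∑ j ∈ s, X j) A = ∑ j ∈ s, ip (X j) A := by
  simp only [ip, Matrix.sum_apply, Finset.sum_mul]
  rw [Finset.sum_comm (s := s)]
  exact Finset.sum_congr rfl fun i _ => Finset.sum_comm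

lemma RΩ_sum {ι : Type*} (s : Finset ι) (Ωs : ι → Multiset (Fin m × Fin n))
    (A : Matrix (Fin m) (Fin n) ℝ) : RΩ (∑ j ∈ s, Ωs j) A = ∑ j ∈ s, RΩ (Ωs j) A := by
  ext i k
  simp only [RΩ, Matrix.of_apply, Matrix.sum_apply, Multiset.count_sum', Nat.cast_sum,
    Finset.sum_mul]

lemma ip_RΩ_eq_sum (Ω : Multiset (Fin m × Fin n)) (X A : Matrix (Fin m) (Fin n) ℝ) :
    ip (RΩ Ω X) A = ∑ x : Fin m × Fin n, Ω.count x * X x.1 x.2 * A x.1 x.2 := by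
  simp only [ip, RΩ, Matrix.of_apply, Fintype.sum_prod_type]

lemma ip_RΩ_self_nonneg (Ω : Multiset (Fin m × Fin n)) (A : Matrix (Fin m) (Fin n) ℝ) :
    0 ≤ ip (RΩ Ω A) A := by
  rw [ip_RΩ_eq_sum]
  exact Finset.sum_nonneg fun x _ => by rw [mul_assoc, ← sq]; positivity

lemma sq_sum_ip_RΩ_le {ι : Type*} [Fintype ι] (Ωs : ι → Multiset (Fin m × Fin n))
    (W : ι → Matrix (Fin m) (Fin n) ℝ) (A : Matrix (Fin m) (Fin n) ℝ) :
    (∑ j, ip (RΩ (Ωs j) (W j)) A) ^ 2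
      ≤ (∑ j, ip (RΩ (Ωs j) (W j)) (W j)) * ∑ j, ip (RΩ (Ωs j) A) A := by
  simp only [ip_RΩ_eq_sum, ← Fintype.sum_prod_type']
  refine Finset.sum_sq_le_sum_mul_sum_of_sq_le_mul _ (fun x _ => ?_) (fun x _ => ?_)
    fun x _ => le_of_eq (by ring)
  all_goals rw [mul_assoc, ← sq]; positivity

lemma abs_ip_smul_sum_RΩ_le {ι : Type*} [Fintype ι] (Ωs : ι → Multiset (Fin m × Fin n))
    (W : ι → Matrix (Fin m) (Fin n) ℝ) {c b : ℝ} (hc : 0 ≤ c)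
    (hW : c * ∑ j, ip (RΩ (Ωs j) (W j)) (W j) ≤ b) (A : Matrix (Fin m) (Fin n) ℝ) :
    |ip (c • ∑ j, RΩ (Ωs j) (W j)) A| ≤ √(c * b) * √(ip (RΩ (∑ j, Ωs j) A) A) := by
  have hWW : 0 ≤ ∑ j, ip (RΩ (Ωs j) (W j)) (W j) :=
    Finset.sum_nonneg fun j _ => ip_RΩ_self_nonneg _ _
  have hAA : 0 ≤ ∑ j, ip (RΩ (Ωs j) A) A := Finset.sum_nonneg fun j _ => ip_RΩ_self_nonneg _ _
  rw [ip_smul_left, ip_sum_left, RΩ_sum, ip_sum_left,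
    ← Real.sqrt_mul (mul_nonneg hc ((mul_nonneg hc hWW).trans hW))]
  refine Real.abs_le_sqrt ?_
  calc (c * ∑ j, ip (RΩ (Ωs j) (W j)) A) ^ 2
      ≤ c * (c * ∑ j, ip (RΩ (Ωs j) (W j)) (W j)) * ∑ j, ip (RΩ (Ωs j) A) A := by
        rw [mul_pow, ← mul_assoc, ← sq, mul_assoc]
        exact mul_le_mul_of_nonneg_left (sq_sum_ip_RΩ_le Ωs W A) (sq_nonneg c)
    _ ≤ c * b * ∑ j, ip (RΩ (Ωs j) A) A := by gcongr

lemma sum_quarter_pow_succ_le (p : ℕ) : ∑ j : Fin p, ((1 : ℝ) / 4) ^ ((j : ℕ) + 1) ≤ 1 / 3 := by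
  have h := geom_sum_Ico_le_of_lt_one (x := (1 : ℝ) / 4) (m := 1) (n := p + 1)
    (by norm_num) (by norm_num)
  rw [Finset.sum_Ico_eq_sum_range, Nat.add_sub_cancel] at h
  rw [Fin.sum_univ_eq_sum_range (fun j => ((1 : ℝ) / 4) ^ (j + 1))]
  simp only [add_comm _ 1]
  norm_num at h ⊢
  exact h

-- `Ωs j` and `W j` stand for the paper's `Ω_{j+1}` and `W_j`, `j = 0, …, p - 1`.
theorem stmt11_general (m n : ℕ)
    (p q : ℕ) (hp : 0 < p)
    (Ωs : Fin p → Multiset (Fin m × Fin n))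
    (r : ℝ) (hr : 0 < r)
    (W : Fin p → Matrix (Fin m) (Fin n) ℝ)
    (hW : ∀ j : Fin p,
        ((m : ℝ) * n / q) * ip (RΩ (Ωs j) (W j)) (W j)
          ≤ (3 * r / 2) * ((1 : ℝ) / 4) ^ ((j : ℕ) + 1))
    (Y : Matrix (Fin m) (Fin n) ℝ)
    (hY : Y = ((m : ℝ) * n / q) • ∑ j, RΩ (Ωs j) (W j))
    (Ω : Multiset (Fin m × Fin n)) (hΩ : Ω = ∑ j, Ωs j) :
    (∀ A : Matrix (Fin m) (Fin n) ℝ,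
        |ip Y A| ≤ Real.sqrt ((m : ℝ) * n * p * r / (2 * (p * q))) *
          Real.sqrt (ip (RΩ Ω A) A)) ∧
    Real.sqrt ((m : ℝ) * n * p * r / (2 * (p * q)))
      = Real.sqrt ((m : ℝ) * n * r / (2 * q)) := by
  have hsqrt : √((m : ℝ) * n * p * r / (2 * (p * q))) = √((m : ℝ) * n * r / (2 * q)) := by
    rw [mul_comm (p : ℝ) q, ← mul_assoc, mul_right_comm _ (p : ℝ) r,
      mul_div_mul_right _ _ (by positivity)]
  refine ⟨fun A => ?_, hsqrt⟩
  have hbatches : (m : ℝ) * n / q * ∑ j, ip (RΩ (Ωs j) (W j)) (W j) ≤ r / 2 :=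
    calc _ = ∑ j, (m : ℝ) * n / q * ip (RΩ (Ωs j) (W j)) (W j) := Finset.mul_sum ..
      _ ≤ ∑ j : Fin p, 3 * r / 2 * ((1 : ℝ) / 4) ^ ((j : ℕ) + 1) :=
          Finset.sum_le_sum fun j _ => hW j
      _ ≤ 3 * r / 2 * (1 / 3) := by
          rw [← Finset.mul_sum]; gcongr; exact sum_quarter_pow_succ_le p
      _ = r / 2 := by ring
  rw [hsqrt, hY, hΩ]
  convert abs_ip_smul_sum_RΩ_le Ωs W (by positivity) hbatches A using 3
  ring

/-- deterministic derivation of inequality (a-4): with `Ω` the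
multiset union of `p` batches `Ω_1, …, Ω_p` of size `q`, matrices
`W_0, …, W_{p−1}` satisfying `(mn/q)⟨R_{Ω_j}(W_{j−1}), W_{j−1}⟩ ≤ (3r/2)4^{−j}`,
and `Y = (mn/q)·Σ_j R_{Ω_j}(W_{j−1})`, one has for every `A`
`|⟨Y, A⟩| ≤ √(mnpr/(2|Ω|))·√⟨R_Ω(A), A⟩ = √(mnr/(2q))·√⟨R_Ω(A), A⟩`.
(Here `W j` plays the role of `W_{j−1}` and the batch `Ωs j` of `Ω_{j+1}`,
for `j = 0, …, p−1`.) -/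
theorem stmt11 (m n : ℕ) (hm : 0 < m) (hmn : m ≤ n)
    (p q : ℕ) (hp : 0 < p) (hq : 0 < q)
    (Ωs : Fin p → Multiset (Fin m × Fin n)) (hcard : ∀ j, (Ωs j).card = q)
    (r : ℝ) (hr : 0 < r)
    (W : Fin p → Matrix (Fin m) (Fin n) ℝ)
    (hW : ∀ j : Fin p,
        ((m : ℝ) * n / q) * ip (RΩ (Ωs j) (W j)) (W j)
          ≤ (3 * r / 2) * ((1 : ℝ) / 4) ^ ((j : ℕ) + 1))
    (Y : Matrix (Fin m) (Fin n) ℝ)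
    (hY : Y = ((m : ℝ) * n / q) • ∑ j, RΩ (Ωs j) (W j))
    (Ω : Multiset (Fin m × Fin n)) (hΩ : Ω = ∑ j, Ωs j) :
    (∀ A : Matrix (Fin m) (Fin n) ℝ,
        |ip Y A| ≤ Real.sqrt ((m : ℝ) * n * p * r / (2 * (p * q))) *
          Real.sqrt (ip (RΩ Ω A) A)) ∧
    Real.sqrt ((m : ℝ) * n * p * r / (2 * (p * q)))
      = Real.sqrt ((m : ℝ) * n * r / (2 * q)) :=
  stmt11_general m n p q hp Ωs r hr W hW Y hY Ω hΩ

end MC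
end

section
/- (Subgradient construction, identity (eqn:2).) For every B ∈ ℝ^{m×n} there exists a matrix W ∈ ℝ^{m×n} with UᵀW = 0, WV = 0, and ‖W‖ ≤ 1, such that ⟨B, W⟩ = ‖P_{T⊥}(B)‖_*. Consequently, for any A_r ∈ ℝ^{m×n} with P_T(A_r) = A_r, one has ⟨B − A_r, UVᵀ + W⟩ = ⟨B − A_r, UVᵀ⟩ + ‖P_{T⊥}(B)‖_*. -/
open scoped BigOperators
open Matrix
open MeasureTheory

/-!
Take `W` to be the polar factor of `C = P_{T⊥}(B)`, i.e. `W = C |C|⁺` with `|C| = (CᵀC)^{1/2}`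
and `⁺` the pseudo-inverse. Then `WᵀW` is the projection onto the range of `CᵀC`, so `‖W‖ ≤ 1`,
and `⟨C, W⟩ = tr |C| = ‖C‖_*`. Since `UᵀC = 0` and `CV = 0`, also `UᵀW = 0` and `WV = 0`, which
makes `W` orthogonal to the range of `P_T`; hence `⟨B, W⟩ = ⟨C, W⟩` and `⟨A_r, W⟩ = 0`.
-/

namespace Matrix

variable {m n 𝕜 : Type*} [Fintype n] [DecidableEq n] [RCLike 𝕜]

theorem IsHermitian.trace_cfc {A : Matrix n n 𝕜} (hA : A.IsHermitian) (f : ℝ → ℝ) :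
    (cfc f A).trace = ∑ i, (f (hA.eigenvalues i) : 𝕜) := by
  rw [hA.cfc_eq, IsHermitian.cfc, Unitary.conjStarAlgAut_apply, trace_mul_comm, ← mul_assoc,
    Unitary.coe_star_mul_self, one_mul, trace_diagonal]
  rfl

theorem cfc_mul_eq_zero_of_mul_eq_zero {A : Matrix n n 𝕜} (hA : IsSelfAdjoint A)
    {f : ℝ → ℝ} (hf : f 0 = 0) {V : Matrix n m 𝕜} (hAV : A * V = 0) : cfc f A * V = 0 := by
  have hfactor : cfc f A = cfc (fun t => f t / t) A * A := calc
    cfc f A = cfc (fun t => f t / t * id t) A :=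
      cfc_congr fun t _ => (div_mul_cancel_of_imp fun ht => ht ▸ hf).symm
    _ = cfc (fun t => f t / t) A * A := by
      rw [cfc_mul _ _ A (A.finite_real_spectrum.continuousOn _), cfc_id ℝ A hA]
  rw [hfactor, Matrix.mul_assoc, hAV, Matrix.mul_zero]

section PolarFactor

variable [Fintype m]

/-- Since `(√0)⁻¹ = 0`, `cfc (√·)⁻¹ (Cᴴ * C)` is the pseudo-inverse of `|C|`, so this is the
partial isometry of the polar decomposition of `C`. -/
noncomputable def polarFactor (C : Matrix m n 𝕜) : Matrix m n 𝕜 :=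
  C * cfc (fun t : ℝ => (√t)⁻¹) (Cᴴ * C)

variable (C : Matrix m n 𝕜)

theorem mul_polarFactor_eq_zero {l : Type*} {P : Matrix l m 𝕜} (hPC : P * C = 0) :
    P * polarFactor C = 0 := by
  rw [polarFactor, ← Matrix.mul_assoc, hPC, Matrix.zero_mul]

theorem polarFactor_mul_eq_zero {l : Type*} {V : Matrix n l 𝕜} (hCV : C * V = 0) :
    polarFactor C * V = 0 := by
  have hAV : Cᴴ * C * V = 0 := by rw [Matrix.mul_assoc, hCV, Matrix.mul_zero]
  rw [polarFactor, Matrix.mul_assoc, cfc_mul_eq_zero_of_mul_eq_zero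
    (isHermitian_conjTranspose_mul_self C) (by simp) hAV, Matrix.mul_zero]

theorem conjTranspose_polarFactor_mul_self :
    (polarFactor C)ᴴ * polarFactor C = cfc (fun t : ℝ => (√t)⁻¹ * t * (√t)⁻¹) (Cᴴ * C) := by
  have hA : IsSelfAdjoint (Cᴴ * C) := isHermitian_conjTranspose_mul_self C
  have hG : (cfc (fun t : ℝ => (√t)⁻¹) (Cᴴ * C))ᴴ = cfc (fun t : ℝ => (√t)⁻¹) (Cᴴ * C) :=
    IsSelfAdjoint.cfc
  have hcont (f : ℝ → ℝ) : ContinuousOn f (spectrum ℝ (Cᴴ * C)) :=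
    finite_real_spectrum.continuousOn f
  calc (polarFactor C)ᴴ * polarFactor C
      = cfc (fun t : ℝ => (√t)⁻¹) (Cᴴ * C) * cfc (fun t : ℝ => t) (Cᴴ * C) *
          cfc (fun t : ℝ => (√t)⁻¹) (Cᴴ * C) := by
        rw [cfc_id' ℝ (Cᴴ * C) hA, polarFactor, conjTranspose_mul, hG]
        simp only [Matrix.mul_assoc]
    _ = cfc (fun t : ℝ => (√t)⁻¹ * t * (√t)⁻¹) (Cᴴ * C) := by
        rw [cfc_mul (fun t : ℝ => (√t)⁻¹ * t) _ _ (hcont _) (hcont _),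
          cfc_mul (fun t : ℝ => (√t)⁻¹) (fun t => t) _ (hcont _) (hcont _)]

end PolarFactor

end Matrix

namespace MC

variable {m n k r : ℕ}

theorem ip_eq_trace (A B : Matrix (Fin m) (Fin n) ℝ) : ip A B = (Aᵀ * B).trace := by
  rw [ip, Matrix.trace, Finset.sum_comm]
  simp [Matrix.mul_apply]

theorem ip_add_left (A B C : Matrix (Fin m) (Fin n) ℝ) : ip (A + B) C = ip A C + ip B C := by
  simp [ip, add_mul, Finset.sum_add_distrib]

theorem ip_sub_left (A B C : Matrix (Fin m) (Fin n) ℝ) : ip (A - B) C = ip A C - ip B C := by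
  simp [ip, sub_mul, Finset.sum_sub_distrib]

theorem ip_add_right (A B C : Matrix (Fin m) (Fin n) ℝ) : ip A (B + C) = ip A B + ip A C := by
  simp [ip, mul_add, Finset.sum_add_distrib]

theorem ip_zero_right (A : Matrix (Fin m) (Fin n) ℝ) : ip A 0 = 0 := by
  simp [ip]

theorem ip_mul_left (P : Matrix (Fin m) (Fin k) ℝ) (A : Matrix (Fin k) (Fin n) ℝ)
    (W : Matrix (Fin m) (Fin n) ℝ) : ip (P * A) W = ip A (Pᵀ * W) := by
  rw [ip_eq_trace, ip_eq_trace, transpose_mul, Matrix.mul_assoc]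

theorem ip_mul_right (A : Matrix (Fin m) (Fin k) ℝ) (Q : Matrix (Fin k) (Fin n) ℝ)
    (W : Matrix (Fin m) (Fin n) ℝ) : ip (A * Q) W = ip A (W * Qᵀ) := by
  rw [ip_eq_trace, ip_eq_trace, transpose_mul, Matrix.mul_assoc, trace_mul_comm,
    Matrix.mul_assoc]

theorem PT_add_PTperp (U : Matrix (Fin m) (Fin r) ℝ) (V : Matrix (Fin n) (Fin r) ℝ)
    (Z : Matrix (Fin m) (Fin n) ℝ) : PT U V Z + PTperp U V Z = Z := by
  simp only [PT, PTperp, Matrix.sub_mul, Matrix.mul_sub, Matrix.one_mul, Matrix.mul_one]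
  abel

section Projections

variable {U : Matrix (Fin m) (Fin r) ℝ} {V : Matrix (Fin n) (Fin r) ℝ}

theorem transpose_mul_PTperp (hU : Uᵀ * U = 1) (Z : Matrix (Fin m) (Fin n) ℝ) :
    Uᵀ * PTperp U V Z = 0 := by
  have hUP : Uᵀ * (1 - U * Uᵀ) = 0 := by
    rw [Matrix.mul_sub, Matrix.mul_one, ← Matrix.mul_assoc, hU, Matrix.one_mul, sub_self]
  rw [PTperp, ← Matrix.mul_assoc, ← Matrix.mul_assoc, hUP, Matrix.zero_mul, Matrix.zero_mul]

theorem PTperp_mul (hV : Vᵀ * V = 1) (Z : Matrix (Fin m) (Fin n) ℝ) :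
    PTperp U V Z * V = 0 := by
  have hPV : (1 - V * Vᵀ) * V = 0 := by
    rw [Matrix.sub_mul, Matrix.one_mul, Matrix.mul_assoc, hV, Matrix.mul_one, sub_self]
  rw [PTperp, Matrix.mul_assoc, hPV, Matrix.mul_zero]

theorem ip_PT_eq_zero {W : Matrix (Fin m) (Fin n) ℝ} (hUW : Uᵀ * W = 0) (hWV : W * V = 0)
    (Z : Matrix (Fin m) (Fin n) ℝ) : ip (PT U V Z) W = 0 := by
  have hleft (X : Matrix (Fin r) (Fin n) ℝ) : ip (U * X) W = 0 := by
    rw [ip_mul_left, hUW, ip_zero_right]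
  have hright (X : Matrix (Fin m) (Fin r) ℝ) : ip (X * Vᵀ) W = 0 := by
    rw [ip_mul_right, transpose_transpose, hWV, ip_zero_right]
  rw [PT, ip_sub_left, ip_add_left, Matrix.mul_assoc U, ← Matrix.mul_assoc Z,
    ← Matrix.mul_assoc (U * (Uᵀ * Z)), hleft, hright, hright, add_zero, sub_self]

end Projections

theorem specNorm_le_of_spectrum_le {W : Matrix (Fin m) (Fin n) ℝ} {c : ℝ} (hc : 0 ≤ c)
    (h : ∀ μ ∈ spectrum ℝ (Wᴴ * W), μ ≤ c ^ 2) : specNorm W ≤ c := by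
  refine Real.iSup_le (fun j => ?_) hc
  rw [← Real.sqrt_sq hc]
  exact Real.sqrt_le_sqrt
    (h _ ((isHermitian_conjTranspose_mul_self W).eigenvalues_mem_spectrum_real j))

section PolarFactor

variable (C : Matrix (Fin m) (Fin n) ℝ)

theorem ip_polarFactor : ip C (polarFactor C) = nuclearNorm C := by
  have hA : IsSelfAdjoint (Cᴴ * C) := isHermitian_conjTranspose_mul_self C
  have hsqrt : Cᴴ * C * cfc (fun t : ℝ => (√t)⁻¹) (Cᴴ * C) = cfc Real.sqrt (Cᴴ * C) := calc
    _ = cfc (id : ℝ → ℝ) (Cᴴ * C) * cfc (fun t : ℝ => (√t)⁻¹) (Cᴴ * C) := by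
      rw [cfc_id ℝ (Cᴴ * C) hA]
    _ = cfc (fun t => id t * (√t)⁻¹) (Cᴴ * C) := (cfc_mul _ _ _
      (finite_real_spectrum.continuousOn _) (finite_real_spectrum.continuousOn _)).symm
    _ = cfc Real.sqrt (Cᴴ * C) := cfc_congr fun t _ => by rw [id, ← div_eq_mul_inv, Real.div_sqrt]
  rw [ip_eq_trace, polarFactor, ← Matrix.mul_assoc, ← conjTranspose_eq_transpose_of_trivial, hsqrt,
    IsHermitian.trace_cfc hA]
  rfl

theorem specNorm_polarFactor_le : specNorm (polarFactor C) ≤ 1 := by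
  refine specNorm_le_of_spectrum_le zero_le_one fun μ hμ => ?_
  have hA : IsSelfAdjoint (Cᴴ * C) := isHermitian_conjTranspose_mul_self C
  rw [conjTranspose_polarFactor_mul_self, cfc_map_spectrum _ _ hA
    (finite_real_spectrum.continuousOn _)] at hμ
  obtain ⟨t, -, rfl⟩ := hμ
  rw [one_pow]
  beta_reduce
  rcases le_or_gt t 0 with ht | ht
  · simp [Real.sqrt_eq_zero'.mpr ht]
  · rw [mul_right_comm, ← mul_inv, ← sq, Real.sq_sqrt ht.le, inv_mul_cancel₀ ht.ne']

end PolarFactor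

theorem stmt15_general (m n r : ℕ)
    (U : Matrix (Fin m) (Fin r) ℝ) (V : Matrix (Fin n) (Fin r) ℝ)
    (hUo : Uᵀ * U = 1) (hVo : Vᵀ * V = 1)
    (B : Matrix (Fin m) (Fin n) ℝ) :
    ∃ W : Matrix (Fin m) (Fin n) ℝ,
      Uᵀ * W = 0 ∧ W * V = 0 ∧ specNorm W ≤ 1 ∧
      ip B W = nuclearNorm (PTperp U V B) ∧
      ∀ Ar : Matrix (Fin m) (Fin n) ℝ, PT U V Ar = Ar →
        ip (B - Ar) (U * Vᵀ + W) = ip (B - Ar) (U * Vᵀ) + nuclearNorm (PTperp U V B) := by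
  set W := polarFactor (PTperp U V B)
  have hUW : Uᵀ * W = 0 := mul_polarFactor_eq_zero _ (transpose_mul_PTperp hUo B)
  have hWV : W * V = 0 := polarFactor_mul_eq_zero _ (PTperp_mul hVo B)
  have hBW : ip B W = nuclearNorm (PTperp U V B) := by
    conv_lhs => rw [← PT_add_PTperp U V B]
    rw [ip_add_left, ip_PT_eq_zero hUW hWV, ip_polarFactor, zero_add]
  refine ⟨W, hUW, hWV, specNorm_polarFactor_le _, hBW, fun Ar hAr => ?_⟩
  have hArW : ip Ar W = 0 := hAr ▸ ip_PT_eq_zero hUW hWV Ar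
  rw [ip_add_right, ip_sub_left B Ar W, hArW, sub_zero, hBW]

/-- subgradient construction, identity (eqn:2): for every `B`
there exists `W` with `UᵀW = 0`, `WV = 0`, `‖W‖ ≤ 1` and
`⟨B, W⟩ = ‖P_{T⊥}(B)‖_*`; consequently, for any `A_r` with `P_T(A_r) = A_r`,
`⟨B − A_r, UVᵀ + W⟩ = ⟨B − A_r, UVᵀ⟩ + ‖P_{T⊥}(B)‖_*`. -/
theorem stmt15 (m n r : ℕ) (hm : 0 < m) (hmn : m ≤ n)
    (U : Matrix (Fin m) (Fin r) ℝ) (V : Matrix (Fin n) (Fin r) ℝ)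
    (hUo : Uᵀ * U = 1) (hVo : Vᵀ * V = 1)
    (B : Matrix (Fin m) (Fin n) ℝ) :
    ∃ W : Matrix (Fin m) (Fin n) ℝ,
      Uᵀ * W = 0 ∧ W * V = 0 ∧ specNorm W ≤ 1 ∧
      ip B W = nuclearNorm (PTperp U V B) ∧
      ∀ Ar : Matrix (Fin m) (Fin n) ℝ, PT U V Ar = Ar →
        ip (B - Ar) (U * Vᵀ + W) = ip (B - Ar) (U * Vᵀ) + nuclearNorm (PTperp U V B) :=
  stmt15_general m n r U V hUo hVo B

end MC
end
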